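/- Let c > 1, and for each sufficiently small γ > 0 let z*_{c,γ} denote the unique positive solution of ψ₁(z) = c·ψ₁(z + γ), and set ḡ_{c,γ} = c·ψ₂(z*_{c,γ} + γ) − ψ₂(z*_{c,γ}) (so that ḡ_{c,γ} = −H_{c,γ}'''(z*_{c,γ}) > 0). Then lim_{γ → 0+} γ³ · ḡ_{c,γ} = 2(√c − 1)⁴ / √c. -/

import Mathlib

open Filter

/-- The digamma function `ψ(x) = (d/dx) log Γ(x)`. -/
noncomputable def digamma (x : ℝ) : ℝ := deriv (fun y => Real.log (Real.Gamma y)) x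

/-- The trigamma function `ψ₁ = ψ'`. -/
noncomputable def trigamma : ℝ → ℝ := deriv digamma

/-- The polygamma function `ψ₂ = ψ₁'`. -/
noncomputable def polygammaTwo : ℝ → ℝ := deriv trigamma

/-!
For `x > 0` the polygamma functions are the sums `ψ₁(x) = ∑ 1/(x+n)²` and
`ψ₂(x) = -2 ∑ 1/(x+n)³`, obtained by differentiating Gauss' limit formula for `log Γ` term by
term. The sandwich `1/x² ≤ ψ₁(x) ≤ 1/x² + 1/x` turns `ψ₁(z) = c ψ₁(z + γ)` into
`c/(1+z) ≤ ((z+γ)/z)² ≤ c(1+z+γ)`, while `(c-1) ψ₁(z+γ) = ψ₁(z) - ψ₁(z+γ) = O(γ/z³)` together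
with `ψ₁(z+γ) ≥ 1/(z+γ)` forces `z*³ = O(γ)`. Hence `γ/z* → √c - 1`, and since
`ψ₂(x) = -2/x³ + O(1)`, `γ³ ḡ = 2(γ/z*)³ - 2c(γ/(z*+γ))³ + o(1) → 2(√c-1)⁴/√c`.
-/

open Topology Finset

-- For `p ≤ 1` the series diverges, so `hurwitzSum p x` is the junk value `0`.
noncomputable def hurwitzSum (p : ℕ) (x : ℝ) : ℝ := ∑' n : ℕ, 1 / (x + n) ^ p

section HurwitzSum

variable {p : ℕ} {x y : ℝ}

lemma summable_one_div_add_pow (hx : 0 ≤ x) (hp : 1 < p) :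
    Summable fun n : ℕ => 1 / (x + n) ^ p := by
  refine ((Real.summable_one_div_nat_add_rpow x p).2 (by exact_mod_cast hp)).congr fun n => ?_
  rw [abs_of_nonneg (by positivity), Real.rpow_natCast, add_comm]

lemma hasSum_one_div_sub_one_div_add_one (hx : 0 < x) :
    HasSum (fun n : ℕ => 1 / (x + n) - 1 / (x + n + 1)) (1 / x) := by
  have hterm (n : ℕ) : 0 ≤ 1 / (x + n) - 1 / (x + n + 1) :=
    sub_nonneg.2 (one_div_le_one_div_of_le (by positivity) (by linarith))
  rw [hasSum_iff_tendsto_nat_of_nonneg hterm]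
  have hpartial (n : ℕ) : ∑ i ∈ range n, (1 / (x + i) - 1 / (x + i + 1)) = 1 / x - 1 / (x + n) := by
    simpa [add_assoc] using Finset.sum_range_sub' (fun i : ℕ => 1 / (x + i)) n
  simp only [hpartial]
  simpa using tendsto_const_nhds.sub
    (tendsto_atTop_add_const_left _ x tendsto_natCast_atTop_atTop).inv_tendsto_atTop

lemma one_div_sub_one_div_add_one_eq (hx : 0 < x) :
    1 / x - 1 / (x + 1) = 1 / (x * (x + 1)) := by
  field_simp
  ring

lemma hurwitzSum_nonneg (hx : 0 ≤ x) : 0 ≤ hurwitzSum p x :=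
  tsum_nonneg fun n => by positivity

lemma hurwitzSum_eq_one_div_pow_add (hx : 0 ≤ x) (hp : 1 < p) :
    hurwitzSum p x = 1 / x ^ p + hurwitzSum p (x + 1) := by
  rw [hurwitzSum, (summable_one_div_add_pow hx hp).tsum_eq_zero_add, hurwitzSum]
  simp only [Nat.cast_zero, add_zero, Nat.cast_add, Nat.cast_one, add_right_comm, add_assoc]

lemma one_div_pow_le_hurwitzSum (hx : 0 ≤ x) (hp : 1 < p) : 1 / x ^ p ≤ hurwitzSum p x := by
  rw [hurwitzSum_eq_one_div_pow_add hx hp]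
  linarith [hurwitzSum_nonneg (p := p) (by linarith : 0 ≤ x + 1)]

lemma hurwitzSum_le_of_le (hx : 0 < x) (hxy : x ≤ y) (hp : 1 < p) :
    hurwitzSum p y ≤ hurwitzSum p x :=
  (summable_one_div_add_pow (hx.le.trans hxy) hp).tsum_le_tsum
    (fun n => one_div_le_one_div_of_le (by positivity) (by gcongr))
    (summable_one_div_add_pow hx.le hp)

lemma hurwitzSum_le_one_div_pow_add (hx : 0 < x) (hp : 1 < p) :
    hurwitzSum p x ≤ 1 / x ^ p + hurwitzSum p 1 := by
  rw [hurwitzSum_eq_one_div_pow_add hx.le hp]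
  gcongr
  exact hurwitzSum_le_of_le one_pos (by linarith) hp

lemma one_div_le_hurwitzSum_two (hx : 0 < x) : 1 / x ≤ hurwitzSum 2 x := by
  refine hasSum_le (fun n => ?_) (hasSum_one_div_sub_one_div_add_one hx)
    (summable_one_div_add_pow hx.le one_lt_two).hasSum
  have hxn : 0 < x + n := by positivity
  rw [one_div_sub_one_div_add_one_eq hxn]
  exact one_div_le_one_div_of_le (by positivity) (by nlinarith)

lemma hurwitzSum_two_le (hx : 0 < x) : hurwitzSum 2 x ≤ 1 / x ^ 2 + 1 / x := by
  rw [hurwitzSum_eq_one_div_pow_add hx.le one_lt_two]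
  gcongr
  refine hasSum_le (fun n => ?_) (summable_one_div_add_pow (by positivity) one_lt_two).hasSum
    (hasSum_one_div_sub_one_div_add_one hx)
  have hxn : 0 < x + n := by positivity
  rw [one_div_sub_one_div_add_one_eq hxn, add_right_comm]
  exact one_div_le_one_div_of_le (by positivity) (by nlinarith)

lemma one_div_sq_sub_one_div_sq_le {a b : ℝ} (ha : 0 < a) (hab : a ≤ b) :
    1 / a ^ 2 - 1 / b ^ 2 ≤ 2 * (b - a) / a ^ 3 := by
  have hb : 0 < b := ha.trans_le hab
  rw [div_sub_div _ _ (by positivity) (by positivity),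
    div_le_div_iff₀ (by positivity) (by positivity)]
  nlinarith [mul_nonneg (mul_nonneg (sub_nonneg.2 hab) (sub_nonneg.2 hab))
    (by positivity : 0 ≤ a ^ 2 * (2 * b + a))]

lemma hurwitzSum_two_sub_le (hx : 0 < x) (hy : 0 ≤ y) :
    hurwitzSum 2 x - hurwitzSum 2 (x + y) ≤ 2 * y * hurwitzSum 3 x := by
  have hxy : 0 ≤ x + y := by positivity
  rw [hurwitzSum, hurwitzSum, hurwitzSum, ← tsum_mul_left,
    ← (summable_one_div_add_pow hx.le one_lt_two).tsum_sub
      (summable_one_div_add_pow hxy one_lt_two)]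
  refine ((summable_one_div_add_pow hx.le one_lt_two).sub
    (summable_one_div_add_pow hxy one_lt_two)).tsum_le_tsum (fun n => ?_)
    ((summable_one_div_add_pow hx.le (by norm_num)).mul_left _)
  calc 1 / (x + n) ^ 2 - 1 / (x + y + n) ^ 2 ≤ 2 * (x + y + n - (x + n)) / (x + n) ^ 3 :=
        one_div_sq_sub_one_div_sq_le (by positivity) (by linarith)
    _ = 2 * y * (1 / (x + n) ^ 3) := by ring

lemma hasDerivAt_one_div_add_pow {a : ℝ} (p : ℕ) (hy : y + a ≠ 0) :
    HasDerivAt (fun y => 1 / (y + a) ^ p) (-(p : ℝ) / (y + a) ^ (p + 1)) y := by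
  have h := (hasDerivAt_zpow (-(p : ℤ)) (y + a) (Or.inl hy)).comp_add_const y a
  rw [show -(p : ℤ) - 1 = -((p + 1 : ℕ) : ℤ) by push_cast; ring, zpow_neg, zpow_natCast] at h
  simpa [zpow_neg, div_eq_mul_inv] using h

lemma hasDerivAt_hurwitzSum (hx : 0 < x) (hp : 1 < p) :
    HasDerivAt (hurwitzSum p) (-(p : ℝ) * hurwitzSum (p + 1) x) x := by
  have hx2 : 0 < x / 2 := by positivity
  have h := hasDerivAt_tsum_of_isPreconnected
    ((summable_one_div_add_pow hx2.le (by omega : 1 < p + 1)).mul_left (p : ℝ)) isOpen_Ioi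
    isPreconnected_Ioi (g := fun (n : ℕ) (y : ℝ) => 1 / (y + n) ^ p)
    (g' := fun (n : ℕ) (y : ℝ) => -(p : ℝ) / (y + n) ^ (p + 1))
    (fun n y (hy : x / 2 < y) => hasDerivAt_one_div_add_pow p (by have := hx2.trans hy; positivity))
    (fun n y (hy : x / 2 < y) => ?_) (half_lt_self hx) (summable_one_div_add_pow hx.le hp)
    (half_lt_self hx)
  · refine h.congr_deriv ?_
    rw [hurwitzSum, ← tsum_mul_left]
    exact tsum_congr fun n => by ring
  · have := hx2.trans hy
    rw [norm_div, norm_neg, Real.norm_natCast, norm_pow, Real.norm_of_nonneg (by positivity),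
      ← mul_one_div]
    gcongr

end HurwitzSum

noncomputable def digammaSeries (x : ℝ) : ℝ :=
  -Real.eulerMascheroniConstant - 1 / x + ∑' n : ℕ, (1 / ((n : ℝ) + 1) - 1 / (x + 1 + n))

section DigammaSeries

variable {x y : ℝ}

lemma abs_one_div_sub_one_div_le (n : ℕ) (hy : 0 ≤ y) :
    |1 / ((n : ℝ) + 1) - 1 / (y + 1 + n)| ≤ y * (1 / (1 + n) ^ 2) := by
  have hdiff : 1 / ((n : ℝ) + 1) - 1 / (y + 1 + n) = y / ((n + 1) * (y + 1 + n)) := by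
    field_simp
    ring
  rw [hdiff, abs_of_nonneg (by positivity), ← div_eq_mul_one_div]
  gcongr
  nlinarith

lemma summable_one_div_sub_one_div (hy : 0 ≤ y) :
    Summable fun n : ℕ => 1 / ((n : ℝ) + 1) - 1 / (y + 1 + n) :=
  .of_norm_bounded ((summable_one_div_add_pow zero_le_one one_lt_two).mul_left y)
    fun n => abs_one_div_sub_one_div_le n hy

lemma hasDerivAt_logGammaSeq (n : ℕ) (hy : 0 < y) :
    HasDerivAt (fun y => Real.BohrMollerup.logGammaSeq y n)
      (Real.log n - ∑ m ∈ range (n + 1), 1 / (y + m)) y := by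
  have hlog : ∀ m ∈ range (n + 1),
      HasDerivAt (fun y => Real.log (y + m)) (1 / (y + m)) y := fun m _ => by
    simpa [one_div] using ((hasDerivAt_id y).add_const (m : ℝ)).log (by positivity)
  exact ((hasDerivAt_mul_const (Real.log n)).add_const _).sub (HasDerivAt.fun_sum hlog)

lemma log_sub_sum_one_div_eq (n : ℕ) :
    Real.log n - ∑ m ∈ range (n + 1), 1 / (y + m) = (Real.log n - harmonic n) - 1 / y +
      ∑ k ∈ range n, (1 / ((k : ℝ) + 1) - 1 / (y + 1 + k)) := by
  rw [sum_range_succ', sum_sub_distrib, harmonic]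
  push_cast
  simp only [add_zero, one_div]
  ring_nf

lemma tendstoUniformlyOn_log_sub_sum_one_div (x : ℝ) :
    TendstoUniformlyOn (fun (n : ℕ) (y : ℝ) => Real.log n - ∑ m ∈ range (n + 1), 1 / (y + m))
      digammaSeries atTop (Set.Ioo 0 (x + 1)) := by
  have hconst : Tendsto (fun n : ℕ => Real.log n - harmonic n) atTop
      (𝓝 (-Real.eulerMascheroniConstant)) := by
    simpa using Real.tendsto_harmonic_sub_log.neg
  have hseries := tendstoUniformlyOn_tsum_nat
    ((summable_one_div_add_pow zero_le_one one_lt_two).mul_left (x + 1))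
    (f := fun (k : ℕ) (y : ℝ) => 1 / ((k : ℝ) + 1) - 1 / (y + 1 + k))
    (s := Set.Ioo 0 (x + 1)) fun k y hy =>
      (abs_one_div_sub_one_div_le k hy.1.le).trans (by gcongr; exact hy.2.le)
  have hpole : TendstoUniformlyOn (fun (_ : ℕ) (y : ℝ) => -(1 / y)) (fun y => -(1 / y)) atTop
      (Set.Ioo 0 (x + 1)) :=
    Metric.tendstoUniformlyOn_iff.2 fun ε hε => Eventually.of_forall fun n y _ => by simpa using hε
  refine (((hconst.tendstoUniformlyOn_const _).add (hpole.add hseries)).congr_right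
    fun y _ => ?_).congr (Eventually.of_forall fun n y _ => ?_)
  · simp only [digammaSeries, Pi.add_apply]
    ring
  · simp only [log_sub_sum_one_div_eq, Pi.add_apply]
    ring

lemma hasDerivAt_log_Gamma (hx : 0 < x) :
    HasDerivAt (fun y => Real.log (Real.Gamma y)) (digammaSeries x) x :=
  hasDerivAt_of_tendstoUniformlyOn isOpen_Ioo (tendstoUniformlyOn_log_sub_sum_one_div x)
    (Eventually.of_forall fun n _ hy => hasDerivAt_logGammaSeq n hy.1)
    (fun _ hy => Real.BohrMollerup.tendsto_log_gamma hy.1) ⟨hx, by linarith⟩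

lemma hasDerivAt_digammaSeries (hx : 0 < x) : HasDerivAt digammaSeries (hurwitzSum 2 x) x := by
  have hseries := hasDerivAt_tsum_of_isPreconnected
    (summable_one_div_add_pow zero_le_one one_lt_two) isOpen_Ioi isPreconnected_Ioi
    (g := fun (n : ℕ) (y : ℝ) => 1 / ((n : ℝ) + 1) - 1 / (y + 1 + n))
    (g' := fun (n : ℕ) (y : ℝ) => 1 / (y + 1 + n) ^ 2)
    (fun n y (hy : 0 < y) => ?_) (fun n y (hy : 0 < y) => ?_) (Set.mem_Ioi.2 hx)
    (summable_one_div_sub_one_div hx.le) (Set.mem_Ioi.2 hx)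
  · have hpole := (hasDerivAt_inv hx.ne').const_sub (-Real.eulerMascheroniConstant)
    rw [hurwitzSum_eq_one_div_pow_add hx.le one_lt_two]
    refine ((hpole.add hseries).congr_deriv ?_).congr_of_eventuallyEq (.of_forall fun y => ?_)
    · simp [hurwitzSum]
    · simp [digammaSeries]
  · have h := ((((hasDerivAt_id' y).add_const (1 : ℝ)).add_const (n : ℝ)).inv
      (by positivity)).const_sub (1 / ((n : ℝ) + 1))
    simpa [one_div, neg_div] using h
  · rw [Real.norm_of_nonneg (by positivity)]
    gcongr
    linarith

end DigammaSeries

section Identification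

variable {x : ℝ}

lemma digamma_eq_digammaSeries (hx : 0 < x) : digamma x = digammaSeries x :=
  (hasDerivAt_log_Gamma hx).deriv

lemma trigamma_eq_hurwitzSum (hx : 0 < x) : trigamma x = hurwitzSum 2 x := by
  have h : digamma =ᶠ[𝓝 x] digammaSeries :=
    eventually_of_mem (Ioi_mem_nhds hx) fun _ hy => digamma_eq_digammaSeries hy
  rw [trigamma, h.deriv_eq, (hasDerivAt_digammaSeries hx).deriv]

lemma polygammaTwo_eq_hurwitzSum (hx : 0 < x) : polygammaTwo x = -2 * hurwitzSum 3 x := by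
  have h : trigamma =ᶠ[𝓝 x] hurwitzSum 2 :=
    eventually_of_mem (Ioi_mem_nhds hx) fun _ hy => trigamma_eq_hurwitzSum hy
  rw [polygammaTwo, h.deriv_eq, (hasDerivAt_hurwitzSum hx one_lt_two).deriv]
  norm_num

end Identification

section Equation

variable {c z w γ : ℝ}

lemma le_div_sq_of_hurwitzSum_two_eq (hc : 0 ≤ c) (hz : 0 < z) (hw : 0 < w)
    (h : hurwitzSum 2 z = c * hurwitzSum 2 w) : c / (1 + z) ≤ (w / z) ^ 2 := by
  have hle : c * (1 / w ^ 2) ≤ 1 / z ^ 2 + 1 / z :=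
    calc c * (1 / w ^ 2) ≤ c * hurwitzSum 2 w :=
          mul_le_mul_of_nonneg_left (one_div_pow_le_hurwitzSum hw.le one_lt_two) hc
      _ = hurwitzSum 2 z := h.symm
      _ ≤ 1 / z ^ 2 + 1 / z := hurwitzSum_two_le hz
  rw [div_pow, div_le_div_iff₀ (by positivity) (by positivity)]
  have := mul_le_mul_of_nonneg_right hle (by positivity : 0 ≤ z ^ 2 * w ^ 2)
  field_simp at this
  linarith

lemma div_sq_le_of_hurwitzSum_two_eq (hc : 0 ≤ c) (hz : 0 < z) (hw : 0 < w)
    (h : hurwitzSum 2 z = c * hurwitzSum 2 w) : (w / z) ^ 2 ≤ c * (1 + w) := by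
  have hle : 1 / z ^ 2 ≤ c * (1 / w ^ 2 + 1 / w) :=
    calc 1 / z ^ 2 ≤ hurwitzSum 2 z := one_div_pow_le_hurwitzSum hz.le one_lt_two
      _ = c * hurwitzSum 2 w := h
      _ ≤ c * (1 / w ^ 2 + 1 / w) := mul_le_mul_of_nonneg_left (hurwitzSum_two_le hw) hc
  rw [div_pow, div_le_iff₀ (by positivity)]
  have := mul_le_mul_of_nonneg_right hle (by positivity : 0 ≤ z ^ 2 * w ^ 2)
  field_simp at this
  linarith

lemma sqrt_sub_one_mul_le_one_of_hurwitzSum_two_eq (hc : 0 ≤ c) (hz : 0 < z) (hw : 0 < w)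
    (hwz : w ≤ z + 1) (h : hurwitzSum 2 z = c * hurwitzSum 2 w) : (√c - 1) * z ≤ 1 := by
  have hle : c * (1 / w) ≤ 1 / z ^ 2 + 1 / z :=
    calc c * (1 / w) ≤ c * hurwitzSum 2 w :=
          mul_le_mul_of_nonneg_left (one_div_le_hurwitzSum_two hw) hc
      _ = hurwitzSum 2 z := h.symm
      _ ≤ 1 / z ^ 2 + 1 / z := hurwitzSum_two_le hz
  have hsq : (√c * z) ^ 2 ≤ (1 + z) ^ 2 := by
    have := mul_le_mul_of_nonneg_right hle (by positivity : 0 ≤ z ^ 2 * w)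
    field_simp at this
    rw [mul_pow, Real.sq_sqrt hc]
    nlinarith
  linarith [(pow_le_pow_iff_left₀ (by positivity) (by positivity) two_ne_zero).1 hsq]

lemma sub_one_mul_pow_three_le_of_hurwitzSum_two_eq (hc : 1 ≤ c) (hz : 0 < z) (hγ : 0 ≤ γ)
    (h : hurwitzSum 2 z = c * hurwitzSum 2 (z + γ)) :
    (c - 1) * z ^ 3 ≤ 2 * γ * (z + γ) * (1 + hurwitzSum 3 1 * z ^ 3) := by
  have hw : 0 < z + γ := by linarith
  have hle : (c - 1) * (1 / (z + γ)) ≤ 2 * γ * (1 / z ^ 3 + hurwitzSum 3 1) :=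
    calc (c - 1) * (1 / (z + γ)) ≤ (c - 1) * hurwitzSum 2 (z + γ) :=
          mul_le_mul_of_nonneg_left (one_div_le_hurwitzSum_two hw) (by linarith)
      _ = hurwitzSum 2 z - hurwitzSum 2 (z + γ) := by rw [h]; ring
      _ ≤ 2 * γ * hurwitzSum 3 z := hurwitzSum_two_sub_le hz hγ
      _ ≤ 2 * γ * (1 / z ^ 3 + hurwitzSum 3 1) := by
          gcongr
          exact hurwitzSum_le_one_div_pow_add hz (by norm_num)
  have := mul_le_mul_of_nonneg_right hle (by positivity : 0 ≤ z ^ 3 * (z + γ))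
  field_simp at this
  linarith

end Equation

section Limits

variable {c : ℝ} {zstar : ℝ → ℝ}

lemma tendsto_zero_of_hurwitzSum_two_eq (hc : 1 < c)
    (h : ∀ᶠ γ in 𝓝[>] 0, 0 < zstar γ ∧ hurwitzSum 2 (zstar γ) = c * hurwitzSum 2 (zstar γ + γ)) :
    Tendsto zstar (𝓝[>] 0) (𝓝 0) := by
  have hs : 1 < √c := Real.lt_sqrt_of_sq_lt (by linarith)
  set B := 1 / (√c - 1)
  set C := 2 * (B + 1) * (1 + hurwitzSum 3 1 * B ^ 3) / (c - 1)
  have hcube : ∀ᶠ γ in 𝓝[>] 0, 0 < zstar γ ∧ zstar γ ^ 3 ≤ C * γ := by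
    filter_upwards [h, Ioc_mem_nhdsGT one_pos] with γ ⟨hz, heq⟩ ⟨hγ, hγ1⟩
    have hzB : zstar γ ≤ B := by
      rw [le_div_iff₀ (by linarith), mul_comm]
      exact sqrt_sub_one_mul_le_one_of_hurwitzSum_two_eq (by linarith) hz (by linarith)
        (by linarith) heq
    have hK : 0 ≤ hurwitzSum 3 1 := hurwitzSum_nonneg zero_le_one
    refine ⟨hz, ?_⟩
    rw [div_mul_eq_mul_div, le_div_iff₀ (by linarith)]
    calc zstar γ ^ 3 * (c - 1)
        ≤ 2 * γ * (zstar γ + γ) * (1 + hurwitzSum 3 1 * zstar γ ^ 3) := by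
          linarith [sub_one_mul_pow_three_le_of_hurwitzSum_two_eq hc.le hz hγ.le heq]
      _ ≤ 2 * γ * (B + 1) * (1 + hurwitzSum 3 1 * B ^ 3) := by gcongr
      _ = 2 * (B + 1) * (1 + hurwitzSum 3 1 * B ^ 3) * γ := by ring
  have hCγ : Tendsto (fun γ => C * γ) (𝓝[>] 0) (𝓝 0) :=
    ((continuous_const_mul C).tendsto' 0 0 (mul_zero C)).mono_left nhdsWithin_le_nhds
  refine tendsto_order.2 ⟨fun a ha => hcube.mono fun γ hγ => ha.trans hγ.1, fun a ha => ?_⟩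
  filter_upwards [hcube, hCγ.eventually (gt_mem_nhds (pow_pos ha 3))] with γ ⟨hz, hle⟩ hlt
  exact lt_of_pow_lt_pow_left₀ 3 ha.le (hle.trans_lt hlt)

lemma tendsto_div_of_hurwitzSum_two_eq (hc : 1 < c)
    (h : ∀ᶠ γ in 𝓝[>] 0, 0 < zstar γ ∧ hurwitzSum 2 (zstar γ) = c * hurwitzSum 2 (zstar γ + γ)) :
    Tendsto (fun γ => γ / zstar γ) (𝓝[>] 0) (𝓝 (√c - 1)) := by
  have hz := tendsto_zero_of_hurwitzSum_two_eq hc h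
  have hγ : Tendsto (fun γ : ℝ => γ) (𝓝[>] 0) (𝓝 0) := tendsto_nhdsWithin_of_tendsto_nhds tendsto_id
  have hpos : ∀ᶠ γ in 𝓝[>] 0, 0 < zstar γ ∧ 0 < zstar γ + γ ∧
      hurwitzSum 2 (zstar γ) = c * hurwitzSum 2 (zstar γ + γ) := by
    filter_upwards [h, self_mem_nhdsWithin] with γ ⟨hzγ, heq⟩ (hγ0 : 0 < γ)
    exact ⟨hzγ, by linarith, heq⟩
  have hsq : Tendsto (fun γ => ((zstar γ + γ) / zstar γ) ^ 2) (𝓝[>] 0) (𝓝 c) := by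
    refine tendsto_of_tendsto_of_tendsto_of_le_of_le' (g := fun γ => c / (1 + zstar γ))
      (h := fun γ => c * (1 + (zstar γ + γ))) ?_ ?_ ?_ ?_
    · have := (tendsto_const_nhds (x := c)).div (tendsto_const_nhds.add hz)
        (by norm_num : (1 : ℝ) + 0 ≠ 0)
      rwa [add_zero, div_one] at this
    · simpa using (tendsto_const_nhds (x := c)).mul
        (tendsto_const_nhds (x := (1 : ℝ)).add (hz.add hγ))
    · filter_upwards [hpos] with γ ⟨hzγ, hwγ, heq⟩
      exact le_div_sq_of_hurwitzSum_two_eq (by linarith) hzγ hwγ heq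
    · filter_upwards [hpos] with γ ⟨hzγ, hwγ, heq⟩
      exact div_sq_le_of_hurwitzSum_two_eq (by linarith) hzγ hwγ heq
  have hratio : Tendsto (fun γ => (zstar γ + γ) / zstar γ) (𝓝[>] 0) (𝓝 √c) := by
    refine hsq.sqrt.congr' ?_
    filter_upwards [hpos] with γ ⟨hzγ, hwγ, _⟩
    exact Real.sqrt_sq (by positivity)
  refine (hratio.sub_const 1).congr' ?_
  filter_upwards [hpos] with γ ⟨hzγ, _, _⟩
  field_simp
  ring

end Limits

lemma pow_three_mul_polygammaTwo_sub_eq {c z γ : ℝ} (hz : 0 < z) (hγ : 0 ≤ γ) :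
    γ ^ 3 * (c * polygammaTwo (z + γ) - polygammaTwo z) =
      2 * (γ / z) ^ 3 - 2 * c * (γ / z / (1 + γ / z)) ^ 3 +
        2 * γ ^ 3 * (hurwitzSum 3 (z + 1) - c * hurwitzSum 3 (z + γ + 1)) := by
  have hw : 0 < z + γ := by linarith
  rw [polygammaTwo_eq_hurwitzSum hz, polygammaTwo_eq_hurwitzSum hw,
    hurwitzSum_eq_one_div_pow_add hz.le (by norm_num),
    hurwitzSum_eq_one_div_pow_add hw.le (by norm_num)]
  field_simp
  ring

lemma two_mul_pow_three_sub_eq {c : ℝ} (hc : 0 < c) :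
    2 * (√c - 1) ^ 3 - 2 * c * ((√c - 1) / (1 + (√c - 1))) ^ 3 = 2 * (√c - 1) ^ 4 / √c := by
  have hs : √c ≠ 0 := (Real.sqrt_pos.2 hc).ne'
  have hcs := Real.sq_sqrt hc.le
  generalize √c = s at hs hcs ⊢
  subst hcs
  rw [add_sub_cancel]
  field_simp

/-- If, for each sufficiently small `γ > 0`, `zstar γ` is a (the unique) positive solution of
`ψ₁(z) = c·ψ₁(z + γ)`, and `ḡ_{c,γ} = c·ψ₂(zstar γ + γ) - ψ₂(zstar γ)`, then
`γ³·ḡ_{c,γ} → 2(√c - 1)⁴/√c` as `γ → 0+`. -/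
theorem gbar_asymptotics (c : ℝ) (hc : 1 < c)
    (γ₀ : ℝ) (hγ₀ : 0 < γ₀) (zstar : ℝ → ℝ)
    (hz : ∀ γ : ℝ, 0 < γ → γ < γ₀ →
      0 < zstar γ ∧ trigamma (zstar γ) = c * trigamma (zstar γ + γ)) :
    Tendsto
      (fun γ : ℝ => γ ^ 3 * (c * polygammaTwo (zstar γ + γ) - polygammaTwo (zstar γ)))
      (nhdsWithin 0 (Set.Ioi 0))
      (nhds (2 * (Real.sqrt c - 1) ^ 4 / Real.sqrt c)) := by
  have hS : ∀ᶠ γ in 𝓝[>] 0,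
      0 < zstar γ ∧ hurwitzSum 2 (zstar γ) = c * hurwitzSum 2 (zstar γ + γ) := by
    filter_upwards [Ioo_mem_nhdsGT hγ₀] with γ ⟨hγ, hγγ₀⟩
    obtain ⟨hzγ, heq⟩ := hz γ hγ hγγ₀
    rw [trigamma_eq_hurwitzSum hzγ, trigamma_eq_hurwitzSum (by linarith)] at heq
    exact ⟨hzγ, heq⟩
  have hq := tendsto_div_of_hurwitzSum_two_eq hc hS
  have hz0 := tendsto_zero_of_hurwitzSum_two_eq hc hS
  have hγ : Tendsto (fun γ : ℝ => γ) (𝓝[>] 0) (𝓝 0) := tendsto_nhdsWithin_of_tendsto_nhds tendsto_id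
  have hs : 0 < √c := Real.sqrt_pos.2 (by linarith)
  have hK {f : ℝ → ℝ} (hf : Tendsto f (𝓝[>] 0) (𝓝 0)) :
      Tendsto (fun γ => hurwitzSum 3 (f γ + 1)) (𝓝[>] 0) (𝓝 (hurwitzSum 3 1)) :=
    (hasDerivAt_hurwitzSum one_pos (by norm_num)).continuousAt.tendsto.comp
      (by simpa using hf.add_const 1)
  have hlim := (((hq.pow 3).const_mul 2).sub
    (((hq.div (tendsto_const_nhds (x := (1 : ℝ)).add hq)
      (by rw [add_sub_cancel]; exact hs.ne')).pow 3).const_mul (2 * c))).add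
    (((hγ.pow 3).const_mul 2).mul
      ((hK hz0).sub ((hK (f := fun γ => zstar γ + γ) (by simpa using hz0.add hγ)).const_mul c)))
  rw [two_mul_pow_three_sub_eq (by linarith), zero_pow three_ne_zero, mul_zero, zero_mul,
    add_zero] at hlim
  refine hlim.congr' ?_
  filter_upwards [hS, self_mem_nhdsWithin] with γ ⟨hzγ, _⟩ (hγ0 : 0 < γ)
  exact (pow_three_mul_polygammaTwo_sub_eq hzγ hγ0.le).symm
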